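/- Let f = u + iv be holomorphic on a neighborhood of the closed unit disk, let μ be a finite Borel measure on S¹ with continuous density and total mass L, let m be its mass parameter, and suppose u restricted to S¹ equals h(m(θ)) for a smooth L-periodic function h. Then (∫_{S¹} v ∂_r v ds)² ≤ (∫_{S¹} v² dμ)(∫_0^L h'(m)² dm), where ds is arclength on S¹ and ∂_r is the radial derivative. -/

import Mathlib

open Metric

/-- Cauchy–Schwarz for weighted interval integrals, via the discriminant. -/
lemma cs_aux (a b w : ℝ → ℝ) (ha : Continuous a) (hb : Continuous b)
    (hw : Continuous w) (hw0 : ∀ θ, 0 ≤ w θ) (c d : ℝ) (hcd : c ≤ d) :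
    (∫ θ in c..d, a θ * b θ * w θ) ^ 2
      ≤ (∫ θ in c..d, a θ ^ 2 * w θ) * (∫ θ in c..d, b θ ^ 2 * w θ) := by
  set A := ∫ θ in c..d, a θ ^ 2 * w θ with hA
  set B := ∫ θ in c..d, a θ * b θ * w θ with hB
  set C := ∫ θ in c..d, b θ ^ 2 * w θ with hC
  have hIA : IntervalIntegrable (fun θ => a θ ^ 2 * w θ) MeasureTheory.volume c d :=
    (((ha.pow 2).mul hw)).intervalIntegrable c d
  have hIB : IntervalIntegrable (fun θ => a θ * b θ * w θ) MeasureTheory.volume c d :=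
    (((ha.mul hb).mul hw)).intervalIntegrable c d
  have hIC : IntervalIntegrable (fun θ => b θ ^ 2 * w θ) MeasureTheory.volume c d :=
    (((hb.pow 2).mul hw)).intervalIntegrable c d
  have key : ∀ t : ℝ, 0 ≤ A * (t * t) + (2 * B) * t + C := by
    intro t
    have h1 : (∫ θ in c..d, (t * a θ + b θ) ^ 2 * w θ)
        = A * (t * t) + (2 * B) * t + C := by
      have hexp : (fun θ => (t * a θ + b θ) ^ 2 * w θ)
          = fun θ => (t * t) * (a θ ^ 2 * w θ)
              + (2 * t * (a θ * b θ * w θ) + b θ ^ 2 * w θ) := by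
        funext θ; ring
      rw [hexp, intervalIntegral.integral_add, intervalIntegral.integral_add,
        intervalIntegral.integral_const_mul, intervalIntegral.integral_const_mul]
      · ring
      · exact hIB.const_mul _
      · exact hIC
      · exact hIA.const_mul _
      · exact (hIB.const_mul _).add hIC
    have h2 : 0 ≤ ∫ θ in c..d, (t * a θ + b θ) ^ 2 * w θ :=
      intervalIntegral.integral_nonneg hcd fun x _ => mul_nonneg (sq_nonneg _) (hw0 x)
    linarith [h1 ▸ h2]
  have := discrim_le_zero key
  rw [discrim] at this
  nlinarith [this]

/-- Key estimate combining Cauchy–Riemann and Cauchy–Schwarz: if `f = u + iv` is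
holomorphic near the closed unit disk, `μ = ρ(θ)dθ` has mass parameter `m` and total
mass `L`, and `u = h(m(θ))` on the circle for a smooth `L`-periodic `h`, then
`(∫_{S¹} v ∂_r v ds)² ≤ (∫_{S¹} v² dμ)(∫_0^L h'(m)² dm)`. -/
theorem stmt_12 (f : ℂ → ℂ) (U : Set ℂ) (hU : IsOpen U)
    (hsub : closedBall (0 : ℂ) 1 ⊆ U) (hf : DifferentiableOn ℂ f U)
    (u v : ℂ → ℝ) (hu : ∀ z, u z = (f z).re) (hv : ∀ z, v z = (f z).im)
    (L : ℝ) (hL : 0 < L)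
    (ρ : ℝ → ℝ) (hρc : Continuous ρ) (hρ : ∀ θ, 0 ≤ ρ θ)
    (m : ℝ → ℝ) (hm : ∀ θ, m θ = ∫ t in (0:ℝ)..θ, ρ t)
    (hmass : m (2 * Real.pi) = L)
    (h : ℝ → ℝ) (hsmooth : ContDiff ℝ (⊤ : ℕ∞) h) (hper : Function.Periodic h L)
    (hbdry : ∀ θ : ℝ, u (Complex.exp (θ * Complex.I)) = h (m θ)) :
    (∫ θ in (0:ℝ)..(2 * Real.pi),
        v (Complex.exp (θ * Complex.I))
          * deriv (fun r : ℝ => v ((r : ℂ) * Complex.exp (θ * Complex.I))) 1) ^ 2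
      ≤ (∫ θ in (0:ℝ)..(2 * Real.pi), (v (Complex.exp (θ * Complex.I))) ^ 2 * ρ θ)
          * ∫ x in (0:ℝ)..L, (deriv h x) ^ 2 := by
  -- membership of the circle in U
  have hmem : ∀ θ : ℝ, Complex.exp (θ * Complex.I) ∈ U := by
    intro θ
    apply hsub
    simp [Metric.mem_closedBall, Complex.dist_eq, Complex.norm_exp_ofReal_mul_I]
  have hfd : ∀ θ : ℝ, DifferentiableAt ℂ f (Complex.exp (θ * Complex.I)) := fun θ =>
    hf.differentiableAt (hU.mem_nhds (hmem θ))
  -- derivative of m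
  have hmd : ∀ θ : ℝ, HasDerivAt m (ρ θ) θ := by
    intro θ
    have : HasDerivAt (fun s => ∫ t in (0:ℝ)..s, ρ t) (ρ θ) θ :=
      intervalIntegral.integral_hasDerivAt_right (hρc.intervalIntegrable 0 θ)
        hρc.aestronglyMeasurable.stronglyMeasurableAtFilter hρc.continuousAt
    exact this.congr_of_eventuallyEq (Filter.Eventually.of_forall fun s => (hm s))
  have hmc : Continuous m := by
    rw [continuous_iff_continuousAt]; exact fun θ => (hmd θ).continuousAt
  have hdh : Continuous (deriv h) := hsmooth.continuous_deriv (by simp)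
  -- key pointwise identity for the radial derivative
  have hkey : ∀ θ : ℝ,
      deriv (fun r : ℝ => v ((r : ℂ) * Complex.exp (θ * Complex.I))) 1
        = -(deriv h (m θ) * ρ θ) := by
    intro θ
    set z : ℂ := Complex.exp (θ * Complex.I) with hz
    -- the curve r ↦ r * z
    have hcurve : HasDerivAt (fun r : ℝ => (r : ℂ) * z) z 1 := by
      simpa using (Complex.ofRealCLM.hasDerivAt (x := (1:ℝ))).mul_const z
    have hfz : HasDerivAt f (deriv f z) z := (hfd θ).hasDerivAt
    have hradial' : HasDerivAt (fun r : ℝ => f ((r : ℂ) * z)) (z * deriv f z) 1 := by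
      have := hfz.scomp_of_eq 1 hcurve (by norm_num)
      simpa [smul_eq_mul, Function.comp_def] using this
    have hradim : HasDerivAt (fun r : ℝ => v ((r : ℂ) * z)) ((z * deriv f z).im) 1 := by
      have : HasDerivAt (fun r : ℝ => (f ((r : ℂ) * z)).im) ((z * deriv f z).im) 1 := by
        simpa [Function.comp_def] using (Complex.imCLM.hasFDerivAt.comp_hasDerivAt 1 hradial')
      exact this.congr_of_eventuallyEq (Filter.Eventually.of_forall fun r => (hv _))
    -- the angular derivative of u along the circle
    have hcirc : HasDerivAt (fun s : ℝ => Complex.exp ((s : ℂ) * Complex.I))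
        (Complex.I * z) θ := by
      have hin : HasDerivAt (fun s : ℝ => (s : ℂ) * Complex.I) Complex.I θ := by
        simpa using (Complex.ofRealCLM.hasDerivAt (x := θ)).mul_const Complex.I
      have hout : HasDerivAt Complex.exp z ((θ : ℂ) * Complex.I) := by
        simpa [hz] using Complex.hasDerivAt_exp ((θ : ℂ) * Complex.I)
      have := hout.scomp_of_eq θ hin rfl
      simpa [smul_eq_mul, Function.comp_def] using this
    have hucirc : HasDerivAt (fun s : ℝ => u (Complex.exp ((s : ℂ) * Complex.I)))
        ((Complex.I * z * deriv f z).re) θ := by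
      have hfc : HasDerivAt (fun s : ℝ => f (Complex.exp ((s : ℂ) * Complex.I)))
          (Complex.I * z * deriv f z) θ := by
        have := hfz.scomp_of_eq θ hcirc rfl
        simpa [smul_eq_mul, Function.comp_def, mul_comm, mul_assoc, mul_left_comm] using this
      have : HasDerivAt (fun s : ℝ => (f (Complex.exp ((s : ℂ) * Complex.I))).re)
          ((Complex.I * z * deriv f z).re) θ := by
        simpa [Function.comp_def] using (Complex.reCLM.hasFDerivAt.comp_hasDerivAt θ hfc)
      exact this.congr_of_eventuallyEq (Filter.Eventually.of_forall fun s => (hu _))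
    -- the angular derivative of h ∘ m
    have hhm : HasDerivAt (fun s : ℝ => h (m s)) (deriv h (m θ) * ρ θ) θ :=
      ((hsmooth.differentiable (by simp) (m θ)).hasDerivAt).comp θ (hmd θ)
    -- equate via hbdry
    have heq : (Complex.I * z * deriv f z).re = deriv h (m θ) * ρ θ := by
      have h1 : HasDerivAt (fun s : ℝ => h (m s)) ((Complex.I * z * deriv f z).re) θ :=
        hucirc.congr_of_eventuallyEq (Filter.Eventually.of_forall fun s => (hbdry s).symm)
      exact h1.unique hhm
    have him : (z * deriv f z).im = -(Complex.I * z * deriv f z).re := by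
      rw [mul_assoc, Complex.I_mul_re, neg_neg]
    rw [hradim.deriv, him, heq]
  -- rewrite the LHS integral
  have hLHS : (∫ θ in (0:ℝ)..(2 * Real.pi),
        v (Complex.exp (θ * Complex.I))
          * deriv (fun r : ℝ => v ((r : ℂ) * Complex.exp (θ * Complex.I))) 1)
      = -∫ θ in (0:ℝ)..(2 * Real.pi),
          v (Complex.exp (θ * Complex.I)) * deriv h (m θ) * ρ θ := by
    rw [← intervalIntegral.integral_neg]
    apply intervalIntegral.integral_congr
    intro θ _
    simp only [hkey]; ring
  -- continuity of v along the circle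
  have hvc : Continuous (fun θ : ℝ => v (Complex.exp (θ * Complex.I))) := by
    rw [continuous_iff_continuousAt]
    intro θ
    have h1 : ContinuousAt (fun θ : ℝ => Complex.exp (θ * Complex.I)) θ := by
      fun_prop
    have hc2 : ContinuousAt f (Complex.exp (θ * Complex.I)) := (hfd θ).continuousAt
    have h3 : ContinuousAt (fun θ : ℝ => f (Complex.exp (θ * Complex.I))) θ :=
      ContinuousAt.comp hc2 h1
    have h4 : ContinuousAt (fun θ : ℝ => (f (Complex.exp (θ * Complex.I))).im) θ :=
      ContinuousAt.comp Complex.continuous_im.continuousAt h3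
    exact h4.congr (Filter.Eventually.of_forall fun s => (hv _).symm)
  -- Cauchy–Schwarz
  have hcs := cs_aux (fun θ => v (Complex.exp (θ * Complex.I)))
    (fun θ => deriv h (m θ)) ρ hvc (hdh.comp hmc) hρc hρ 0 (2 * Real.pi)
    (by positivity)
  -- change of variables
  have hcv : (∫ θ in (0:ℝ)..(2 * Real.pi), (deriv h (m θ)) ^ 2 * ρ θ)
      = ∫ x in (0:ℝ)..L, (deriv h x) ^ 2 := by
    have hm0 : m 0 = 0 := by simp [hm 0]
    have := intervalIntegral.integral_comp_smul_deriv
      (f := m) (f' := ρ) (g := fun x => (deriv h x) ^ 2)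
      (a := 0) (b := 2 * Real.pi)
      (fun x _ => hmd x) hρc.continuousOn (hdh.pow 2)
    rw [hm0, hmass] at this
    rw [← this]
    apply intervalIntegral.integral_congr
    intro θ _
    simp [smul_eq_mul, Function.comp]
    ring
  rw [hLHS, neg_pow, ← hcv]
  simpa using hcs
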